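/- arXiv:1303.4440 — 2 statements merged into one kernel-verified Lean document; each statement's English description precedes it below -/
import Mathlib

section
/- Let G and H be distribution functions on ℝ such that G has finite mean m(G), H has mean m(H) = −h for some h > 0, and H̄(y) = o(Ḡ(y)) as y → ∞. Then for every ε > 0 there exists a distribution function H_ε such that H̄(y) ≤ H̄_ε(y) for all y, the mean of H_ε satisfies m(H_ε) ≤ −h/2, and H̄_ε(y) = ε Ḡ(y) for all sufficiently large y. -/
open MeasureTheory ProbabilityTheory Filter Set

noncomputable section

/-- The (upper) tail `H̄(y) = μ((y,∞))` of a (probability) measure on `ℝ`. -/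
def mtail (μ : Measure ℝ) (y : ℝ) : ℝ := (μ (Set.Ioi y)).toReal

/-- The integrated (second-tail) distribution tail `H̄ˢ(y) = min(1, ∫_y^∞ H̄(t) dt)`. -/
def mtailInt (μ : Measure ℝ) (y : ℝ) : ℝ := min 1 (∫ t in Set.Ioi y, mtail μ t)

/-- Convolution of two measures on `ℝ` (the distribution of a sum of independent r.v.s). -/
def mconv (μ ν : Measure ℝ) : Measure ℝ := Measure.map (fun p : ℝ × ℝ => p.1 + p.2) (μ.prod ν)

/-- A distribution on `ℝ₊` is subexponential if its tail is everywhere positive and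
`H̄^{*2}(y)/H̄(y) → 2` as `y → ∞`. -/
def Subexp (μ : Measure ℝ) : Prop :=
  (∀ y, 0 < mtail μ y) ∧
  Tendsto (fun y => mtail (mconv μ μ) y / mtail μ y) atTop (nhds 2)

/-- A tail function `f` is long-tailed if it is everywhere positive and
`f(y+z)/f(y) → 1` as `y → ∞` for every fixed `z > 0`. -/
def LongTailedFun (f : ℝ → ℝ) : Prop :=
  (∀ y, 0 < f y) ∧ ∀ z > 0, Tendsto (fun y => f (y + z) / f y) atTop (nhds 1)

/-- The probability measure on `ℝ` whose distribution function is the integrated-tail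
distribution `Hˢ`, i.e. whose tail is `H̄ˢ(y) = min(1, ∫_y^∞ H̄(t) dt)`. -/
def intTailMeasure (μ : Measure ℝ) : Measure ℝ :=
  (volume.restrict {t : ℝ | ∫ s in Set.Ioi t, mtail μ s < 1}).withDensity
    (fun t => ENNReal.ofReal (mtail μ t))

/-- The integrated-tail distribution `Hˢ` is subexponential. -/
def SubexpIntTail (μ : Measure ℝ) : Prop := Subexp (intTailMeasure μ)

/-- The `n`-th regeneration cycle `Z_n = (τ_n; X_{T_{n-1}+1}, …, X_{T_n})` of a process `X`
with regeneration times `T`, encoded as the cycle length together with the (padded) cycle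
path. -/
def cycle {Ω 𝒳 : Type*} (X : ℕ → Ω → 𝒳) (T : ℕ → Ω → ℕ) (n : ℕ) (ω : Ω) :
    ℕ × (ℕ → 𝒳 ⊕ Unit) :=
  let start : ℕ := if n = 0 then 0 else T (n - 1) ω
  (T n ω - start,
   fun i => if i < T n ω - start then Sum.inl (X (start + 1 + i) ω) else Sum.inr ())

lemma mtail_nonneg (μ : Measure ℝ) (y : ℝ) : 0 ≤ mtail μ y := ENNReal.toReal_nonneg

lemma mtail_le_one (μ : Measure ℝ) [IsProbabilityMeasure μ] (y : ℝ) : mtail μ y ≤ 1 := by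
  have : μ (Set.Ioi y) ≤ 1 := prob_le_one
  simpa [mtail] using ENNReal.toReal_le_of_le_ofReal zero_le_one (by simpa using this)

lemma mtail_tendsto_zero (μ : Measure ℝ) [IsProbabilityMeasure μ] :
    Tendsto (mtail μ) atTop (nhds 0) := by
  have h1 : Tendsto (fun a => μ (Set.Iic a)) atTop (nhds (μ Set.univ)) :=
    tendsto_measure_Iic_atTop μ
  have h2 : Tendsto (fun a => (μ (Set.Iic a)).toReal) atTop (nhds 1) := by
    have := (ENNReal.tendsto_toReal (by simp : μ Set.univ ≠ ⊤)).comp h1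
    simpa [Function.comp_def] using this
  have h3 : ∀ a, mtail μ a = 1 - (μ (Set.Iic a)).toReal := by
    intro a
    have hc : Set.Ioi a = (Set.Iic a)ᶜ := (Set.compl_Iic).symm
    rw [mtail, hc, measure_compl measurableSet_Iic (measure_ne_top _ _)]
    rw [ENNReal.toReal_sub_of_le (measure_mono (Set.subset_univ _)) (measure_ne_top _ _)]
    simp
  simp only [funext h3]
  simpa using (tendsto_const_nhds (x := (1:ℝ))).sub h2

lemma mtail_eq_one_sub (μ : Measure ℝ) [IsProbabilityMeasure μ] (a : ℝ) :
    mtail μ a = 1 - (μ (Set.Iic a)).toReal := by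
  have hc : Set.Ioi a = (Set.Iic a)ᶜ := (Set.compl_Iic).symm
  rw [mtail, hc, measure_compl measurableSet_Iic (measure_ne_top _ _)]
  rw [ENNReal.toReal_sub_of_le (measure_mono (Set.subset_univ _)) (measure_ne_top _ _)]
  simp

lemma tendsto_intIic (μ : Measure ℝ) (hint : Integrable id μ) :
    Tendsto (fun a => ∫ t in Set.Iic a, t ∂μ) atTop (nhds (∫ t, t ∂μ)) := by
  have := tendsto_setIntegral_of_monotone (μ := μ) (f := fun t => t)
    (s := fun a : ℝ => Set.Iic a) (fun i => measurableSet_Iic) monotone_Iic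
    (by rw [Set.iUnion_Iic]; exact hint.integrableOn)
  simpa [Set.iUnion_Iic] using this

lemma tendsto_intIoi (μ : Measure ℝ) (hint : Integrable id μ) :
    Tendsto (fun a => ∫ t in Set.Ioi a, t ∂μ) atTop (nhds 0) := by
  have hempty : ⋂ a : ℝ, Set.Ioi a = ∅ := by
    ext x
    simp only [Set.mem_iInter, Set.mem_Ioi, Set.mem_empty_iff_false, iff_false, not_forall, not_lt]
    exact ⟨x, le_refl x⟩
  have := tendsto_setIntegral_of_antitone (μ := μ) (f := fun t => t)
    (s := fun a : ℝ => Set.Ioi a) (fun i => measurableSet_Ioi)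
    (fun i j hij => Set.Ioi_subset_Ioi hij) ⟨0, hint.integrableOn⟩
  simpa [hempty] using this

/-- **Property 1.**  If `G` has finite mean, `H` has mean `-h < 0`, and `H̄(y) = o(Ḡ(y))`,
then for every `ε > 0` there is a distribution `H_ε` with `H̄ ≤ H̄_ε` pointwise,
mean `m(H_ε) ≤ -h/2`, and `H̄_ε(y) = ε Ḡ(y)` for all sufficiently large `y`. -/
theorem statement10
    (G H : Measure ℝ) [IsProbabilityMeasure G] [IsProbabilityMeasure H]
    (hGint : Integrable id G)
    (hHint : Integrable id H)
    (h : ℝ) (hh : 0 < h) (hHmean : ∫ t, t ∂H = -h)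
    (hHG : (fun y => mtail H y) =o[atTop] fun y => mtail G y) :
    ∀ ε > (0:ℝ), ∃ Hε : Measure ℝ, IsProbabilityMeasure Hε
      ∧ (∀ y, mtail H y ≤ mtail Hε y)
      ∧ Integrable id Hε
      ∧ (∫ t, t ∂Hε ≤ -h / 2)
      ∧ (∀ᶠ y in (atTop : Filter ℝ), mtail Hε y = ε * mtail G y) := by
  intro ε hε
  -- limits
  have hH0 : Tendsto (mtail H) atTop (nhds 0) := mtail_tendsto_zero H
  have hG0 : Tendsto (mtail G) atTop (nhds 0) := mtail_tendsto_zero G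
  have hIH : Tendsto (fun a => ∫ t in Set.Iic a, t ∂H) atTop (nhds (-h)) := by
    simpa [hHmean] using tendsto_intIic H hHint
  have hIG : Tendsto (fun a => ∫ t in Set.Ioi a, t ∂G) atTop (nhds 0) := tendsto_intIoi G hGint
  have hθ : Tendsto (fun a => (1 - ε * mtail G a) / (1 - mtail H a)) atTop (nhds 1) := by
    have h1 : Tendsto (fun a => 1 - ε * mtail G a) atTop (nhds 1) := by
      simpa using (tendsto_const_nhds (x := (1:ℝ))).sub (tendsto_const_nhds.mul hG0)
    have h2 : Tendsto (fun a => 1 - mtail H a) atTop (nhds 1) := by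
      simpa using (tendsto_const_nhds (x := (1:ℝ))).sub hH0
    have := h1.div h2 one_ne_zero
    simp only [div_one] at this
    exact this
  have hmean : Tendsto (fun a => (1 - ε * mtail G a) / (1 - mtail H a) *
      (∫ t in Set.Iic a, t ∂H) + ε * (∫ t in Set.Ioi a, t ∂G)) atTop (nhds (-h)) := by
    have := (hθ.mul hIH).add ((tendsto_const_nhds (x := ε)).mul hIG)
    simpa using this
  -- eventual conditions
  have E1 : ∀ᶠ a in atTop, mtail H a ≤ 1/2 :=
    hH0.eventually_le_const (by norm_num)
  have E2 : ∀ᶠ a in atTop, ε * mtail G a ≤ 1 := by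
    have : Tendsto (fun a => ε * mtail G a) atTop (nhds 0) := by
      simpa using tendsto_const_nhds.mul hG0
    exact this.eventually_le_const one_pos
  have E3 : ∀ᶠ a in atTop, (1 - ε * mtail G a) / (1 - mtail H a) *
      (∫ t in Set.Iic a, t ∂H) + ε * (∫ t in Set.Ioi a, t ∂G) ≤ -h/2 :=
    hmean.eventually_le_const (by linarith)
  have E4 : ∀ᶠ y in atTop, mtail H y ≤ ε * mtail G y := by
    filter_upwards [hHG.def hε] with y hy
    simpa [Real.norm_of_nonneg (mtail_nonneg H y), Real.norm_of_nonneg (mtail_nonneg G y)] using hy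
  obtain ⟨a₀, ha₀⟩ := eventually_atTop.1 E4
  obtain ⟨a, ⟨hE1, hE2, hE3⟩, haa₀⟩ := ((E1.and (E2.and E3)).and (eventually_ge_atTop a₀)).exists
  have htail : ∀ y, a ≤ y → mtail H y ≤ ε * mtail G y := fun y hy => ha₀ y (le_trans haa₀ hy)
  -- notation
  set β := mtail H a with hβ
  set c := ε * mtail G a with hc
  set θ := (1 - c) / (1 - β) with hθdef
  have hβ0 : 0 ≤ β := mtail_nonneg H a
  have hc0 : 0 ≤ c := mul_nonneg hε.le (mtail_nonneg G a)
  have hβhalf : β ≤ 1/2 := hE1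
  have hc1 : c ≤ 1 := hE2
  have hβc : β ≤ c := htail a le_rfl
  have h1β : (0:ℝ) < 1 - β := by linarith
  have hθ0 : 0 ≤ θ := div_nonneg (by linarith) h1β.le
  have hθ1 : θ ≤ 1 := (div_le_one h1β).mpr (by linarith)
  have hkey : θ * (1 - β) = 1 - c := div_mul_cancel₀ _ h1β.ne'
  -- the measure
  set Hε : Measure ℝ := (ENNReal.ofReal θ) • H.restrict (Set.Iic a)
      + (ENNReal.ofReal ε) • G.restrict (Set.Ioi a) with hHεdef
  have hApp : ∀ s : Set ℝ, MeasurableSet s →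
      Hε s = ENNReal.ofReal θ * H (s ∩ Set.Iic a) + ENNReal.ofReal ε * G (s ∩ Set.Ioi a) := by
    intro s hs
    simp [hHεdef, Measure.add_apply, Measure.smul_apply, Measure.restrict_apply hs, smul_eq_mul]
  have hAppReal : ∀ s : Set ℝ, MeasurableSet s →
      (Hε s).toReal = θ * (H (s ∩ Set.Iic a)).toReal + ε * (G (s ∩ Set.Ioi a)).toReal := by
    intro s hs
    rw [hApp s hs, ENNReal.toReal_add, ENNReal.toReal_mul, ENNReal.toReal_mul,
      ENNReal.toReal_ofReal hθ0, ENNReal.toReal_ofReal hε.le]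
    · exact ENNReal.mul_ne_top ENNReal.ofReal_ne_top (measure_ne_top _ _)
    · exact ENNReal.mul_ne_top ENNReal.ofReal_ne_top (measure_ne_top _ _)
  -- tail computations
  have htail_ge : ∀ y, a ≤ y → mtail Hε y = ε * mtail G y := by
    intro y hy
    have h1 : Set.Ioi y ∩ Set.Iic a = ∅ := by
      ext x; simp only [Set.mem_inter_iff, Set.mem_Ioi, Set.mem_Iic, Set.mem_empty_iff_false,
        iff_false, not_and, not_le]
      intro hx; linarith
    have h2 : Set.Ioi y ∩ Set.Ioi a = Set.Ioi y :=
      Set.inter_eq_left.mpr (Set.Ioi_subset_Ioi hy)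
    rw [mtail, hAppReal _ measurableSet_Ioi, h1, h2]
    simp [mtail]
  have htail_lt : ∀ y, y < a →
      mtail Hε y = θ * (mtail H y - β) + c := by
    intro y hy
    have h2 : Set.Ioi y ∩ Set.Ioi a = Set.Ioi a :=
      Set.inter_eq_right.mpr (Set.Ioi_subset_Ioi hy.le)
    have h1 : Set.Ioi y ∩ Set.Iic a = Set.Ioc y a := rfl
    have hsplit : (H (Set.Ioc y a)).toReal = mtail H y - β := by
      have hu : Set.Ioc y a ∪ Set.Ioi a = Set.Ioi y := Set.Ioc_union_Ioi_eq_Ioi hy.le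
      have hd : Disjoint (Set.Ioc y a) (Set.Ioi a) := by
        rw [Set.disjoint_left]
        rintro x ⟨hx1, hx2⟩ hx3
        exact absurd hx3 (not_lt.2 hx2)
      have hm : H (Set.Ioi y) = H (Set.Ioc y a) + H (Set.Ioi a) := by
        rw [← hu]; exact measure_union hd measurableSet_Ioi
      have hm2 := congrArg ENNReal.toReal hm
      rw [ENNReal.toReal_add (measure_ne_top _ _) (measure_ne_top _ _)] at hm2
      rw [hβ]
      simp only [mtail]
      linarith [hm2]
    rw [mtail, hAppReal _ measurableSet_Ioi, h1, h2, hsplit, hc]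
    simp only [mtail]
  refine ⟨Hε, ?_, ?_, ?_, ?_, ?_⟩
  · -- probability measure
    constructor
    have hHIic : H (Set.Iic a) = ENNReal.ofReal (1 - β) := by
      have h1 : (H (Set.Iic a)).toReal = 1 - β := by
        have h2 := mtail_eq_one_sub H a
        rw [← hβ] at h2
        linarith
      rw [← h1, ENNReal.ofReal_toReal (measure_ne_top _ _)]
    have hGIoi : G (Set.Ioi a) = ENNReal.ofReal (mtail G a) :=
      (ENNReal.ofReal_toReal (measure_ne_top _ _)).symm
    rw [hApp Set.univ MeasurableSet.univ, Set.univ_inter, Set.univ_inter, hHIic, hGIoi,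
      ← ENNReal.ofReal_mul hθ0, ← ENNReal.ofReal_mul hε.le, hkey,
      ← ENNReal.ofReal_add (by linarith) (mul_nonneg hε.le (mtail_nonneg G a))]
    rw [show 1 - c + ε * mtail G a = 1 by rw [hc]; ring]
    exact ENNReal.ofReal_one
  · -- tail domination
    intro y
    rcases le_or_gt a y with hy | hy
    · rw [htail_ge y hy]; exact htail y hy
    · rw [htail_lt y hy]
      have hT1 : mtail H y ≤ 1 := mtail_le_one H y
      have hTβ : β ≤ mtail H y := by
        rw [hβ]
        simp only [mtail]
        exact ENNReal.toReal_mono (measure_ne_top _ _)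
          (measure_mono (Set.Ioi_subset_Ioi hy.le))
      nlinarith [mul_nonneg (sub_nonneg.2 hθ1) (sub_nonneg.2 hT1)]
  · -- integrable
    exact Integrable.add_measure
      ((hHint.restrict).smul_measure ENNReal.ofReal_ne_top)
      ((hGint.restrict).smul_measure ENNReal.ofReal_ne_top)
  · -- mean
    have hint1 : Integrable (fun t : ℝ => t) ((ENNReal.ofReal θ) • H.restrict (Set.Iic a)) :=
      (hHint.restrict).smul_measure ENNReal.ofReal_ne_top
    have hint2 : Integrable (fun t : ℝ => t) ((ENNReal.ofReal ε) • G.restrict (Set.Ioi a)) :=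
      (hGint.restrict).smul_measure ENNReal.ofReal_ne_top
    have : ∫ t, t ∂Hε = θ * (∫ t in Set.Iic a, t ∂H) + ε * (∫ t in Set.Ioi a, t ∂G) := by
      rw [hHεdef, integral_add_measure hint1 hint2, integral_smul_measure, integral_smul_measure,
        ENNReal.toReal_ofReal hθ0, ENNReal.toReal_ofReal hε.le]
      simp [smul_eq_mul]
    rw [this]
    exact hE3
  · -- eventual equality
    filter_upwards [eventually_ge_atTop a] with y hy
    exact htail_ge y hy
end
end

section
/- Let {ξ_n}_{n≥1} be an i.i.d. sequence of nonnegative random variables with subexponential distribution function G, and for each n put α_n = sup_{y≥0} P(ξ_1+…+ξ_n > y)/P(ξ_1 > y) = sup_{y≥0} Ḡ^{*n}(y)/Ḡ(y). Then for any u > 0 there exists k > 0 such that α_n ≤ k(1+u)^n for all n. -/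
open MeasureTheory ProbabilityTheory Filter Set
open scoped ENNReal

noncomputable section

/-- **Property 6 (Kesten's bound).**  For an i.i.d. sequence of nonnegative random
variables with subexponential distribution `G`, setting
`α_n = sup_{y≥0} P(ξ₁+…+ξ_n > y)/P(ξ₁ > y)`, for any `u > 0` there is `k > 0` with
`α_n ≤ k(1+u)^n` for all `n`. -/
theorem statement15
    {Ω : Type*} [MeasurableSpace Ω] (P : Measure Ω) [IsProbabilityMeasure P]
    (ξ : ℕ → Ω → ℝ) (hξmeas : ∀ n, Measurable (ξ n))
    (hindep : iIndepFun ξ P)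
    (G : Measure ℝ) [IsProbabilityMeasure G] (hGpos : G (Set.Iio 0) = 0)
    (hdist : ∀ n, 1 ≤ n → Measure.map (ξ n) P = G)
    (hGsub : Subexp G) :
    ∀ u > (0:ℝ), ∃ k > (0:ℝ), ∀ n, 1 ≤ n → ∀ y, 0 ≤ y →
      (P {ω | (∑ i ∈ Finset.Icc 1 n, ξ i ω) > y}).toReal
        ≤ k * (1 + u) ^ n * (P {ω | ξ 1 ω > y}).toReal := by
  intro u hu
  classical
  set g : ℝ → ℝ≥0∞ := fun y => G (Set.Ioi y) with hgdef
  have hgle : ∀ y, g y ≤ 1 := fun y => prob_le_one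
  have hgne : ∀ y, g y ≠ ⊤ := fun y => measure_ne_top G _
  have hgpos : ∀ y, 0 < g y := by
    intro y
    have h := hGsub.1 y
    refine pos_iff_ne_zero.mpr fun h0 => ?_
    have h0' : G (Set.Ioi y) = 0 := h0
    rw [mtail, h0'] at h
    simp at h
  set S : ℕ → Ω → ℝ := fun n ω => ∑ i ∈ Finset.Icc 1 n, ξ i ω with hSdef
  have hSmeas : ∀ n, Measurable (S n) :=
    fun n => Finset.measurable_sum _ (fun i _ => hξmeas i)
  -- recursion
  have hrec : ∀ n y, P (S (n+1) ⁻¹' Set.Ioi y)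
      = ∫⁻ t, P (S n ⁻¹' Set.Ioi (y - t)) ∂G := by
    intro n y
    have hSfun : S n = ∑ j ∈ Finset.Icc 1 n, ξ j := by
      funext ω; simp [hSdef, Finset.sum_apply]
    have hind : IndepFun (ξ (n+1)) (S n) P := by
      rw [hSfun]
      exact (hindep.indepFun_finset_sum_of_notMem hξmeas (by simp)).symm
    have hprob : IsProbabilityMeasure (P.map (S n)) :=
      Measure.isProbabilityMeasure_map (hSmeas n).aemeasurable
    have hpair : P.map (fun ω => (ξ (n+1) ω, S n ω)) = G.prod (P.map (S n)) := by
      have h := (indepFun_iff_map_prod_eq_prod_map_map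
        (hξmeas (n+1)).aemeasurable (hSmeas n).aemeasurable).mp hind
      rwa [hdist (n+1) (Nat.succ_le_succ (Nat.zero_le n))] at h
    have hset : MeasurableSet {p : ℝ × ℝ | y < p.2 + p.1} :=
      measurableSet_lt measurable_const (measurable_snd.add measurable_fst)
    have hSsucc : S (n+1) ⁻¹' Set.Ioi y
        = (fun ω => (ξ (n+1) ω, S n ω)) ⁻¹' {p : ℝ × ℝ | y < p.2 + p.1} := by
      ext ω
      simp only [Set.mem_preimage, Set.mem_Ioi, Set.mem_setOf_eq, hSdef]
      rw [Finset.sum_Icc_succ_top (Nat.succ_le_succ (Nat.zero_le n))]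
    rw [hSsucc, ← Measure.map_apply ((hξmeas (n+1)).prodMk (hSmeas n)) hset, hpair,
      Measure.prod_apply hset]
    refine lintegral_congr fun t => ?_
    have : Prod.mk t ⁻¹' {p : ℝ × ℝ | y < p.2 + p.1} = Set.Ioi (y - t) := by
      ext s; simp [sub_lt_iff_lt_add]
    rw [this, Measure.map_apply (hSmeas n) measurableSet_Ioi]
  -- base case
  have hbase : ∀ y, P (S 1 ⁻¹' Set.Ioi y) = g y := by
    intro y
    have hS1 : S 1 = ξ 1 := by funext ω; simp [hSdef]
    rw [hS1, ← Measure.map_apply (hξmeas 1) measurableSet_Ioi, hdist 1 le_rfl]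
  -- tail of second convolution
  set D : ℝ → ℝ≥0∞ := fun y => ∫⁻ t in Set.Iic y, g (y - t) ∂G with hDdef
  have hsplit2 : ∀ y, 0 ≤ y → P (S 2 ⁻¹' Set.Ioi y) = D y + g y := by
    intro y hy
    rw [hrec 1 y]
    have hcong : (fun t => P (S 1 ⁻¹' Set.Ioi (y - t))) = fun t => g (y - t) := by
      funext t; rw [hbase]
    rw [hcong, ← lintegral_add_compl (fun t => g (y - t)) (measurableSet_Iic (a := y)),
      compl_Iic]
    congr 1
    have h1 : ∀ t ∈ Set.Ioi y, g (y - t) = 1 := by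
      intro t ht
      have hneg : y - t < 0 := by simp only [Set.mem_Ioi] at ht; linarith
      have hsub : Set.Ici (0:ℝ) ⊆ Set.Ioi (y - t) := fun s hs => lt_of_lt_of_le hneg hs
      have h1' : (1:ℝ≥0∞) ≤ g (y - t) := by
        calc (1:ℝ≥0∞) = G (Set.Ici 0) := by
              rw [← compl_Iio, measure_compl measurableSet_Iio (measure_ne_top G _), hGpos]
              simp
          _ ≤ g (y - t) := measure_mono hsub
      exact le_antisymm (hgle _) h1'
    rw [setLIntegral_congr_fun measurableSet_Ioi
        h1, setLIntegral_one]
  have hconv2 : ∀ y, 0 ≤ y → mtail (mconv G G) y = (P (S 2 ⁻¹' Set.Ioi y)).toReal := by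
    intro y hy
    have hmadd : Measurable fun p : ℝ × ℝ => p.1 + p.2 := measurable_fst.add measurable_snd
    have hset : MeasurableSet {p : ℝ × ℝ | y < p.1 + p.2} :=
      measurableSet_lt measurable_const hmadd
    have h1 : mconv G G (Set.Ioi y) = ∫⁻ t, g (y - t) ∂G := by
      rw [mconv, Measure.map_apply hmadd measurableSet_Ioi]
      have : (fun p : ℝ × ℝ => p.1 + p.2) ⁻¹' Set.Ioi y = {p : ℝ × ℝ | y < p.1 + p.2} := rfl
      rw [this, Measure.prod_apply hset]
      refine lintegral_congr fun t => ?_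
      have : Prod.mk t ⁻¹' {p : ℝ × ℝ | y < p.1 + p.2} = Set.Ioi (y - t) := by
        ext s; simp [sub_lt_iff_lt_add']
      rw [this]
    have h2 : P (S 2 ⁻¹' Set.Ioi y) = ∫⁻ t, g (y - t) ∂G := by
      rw [hrec 1 y]
      exact lintegral_congr fun t => hbase _
    rw [mtail, h1, ← h2]
  -- choose T
  obtain ⟨T0, hT0⟩ := Filter.eventually_atTop.mp
    (hGsub.2.eventually_lt_const (show (2:ℝ) < 2 + u by linarith))
  set T : ℝ := max T0 0 with hTdef
  have hT : ∀ y, T ≤ y → mtail (mconv G G) y ≤ (2 + u) * mtail G y := by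
    intro y hy
    have h := hT0 y (le_trans (le_max_left _ _) hy)
    have hgy := hGsub.1 y
    rw [div_lt_iff₀ hgy] at h
    linarith
  -- D bound for large y
  have hDfin : ∀ y, 0 ≤ y → D y ≠ ⊤ := by
    intro y hy
    have h2 := hsplit2 y hy
    have : D y ≤ 1 := by
      calc D y ≤ D y + g y := le_self_add
        _ = P (S 2 ⁻¹' Set.Ioi y) := (hsplit2 y hy).symm
        _ ≤ 1 := prob_le_one
    exact (lt_of_le_of_lt this ENNReal.one_lt_top).ne
  have hD : ∀ y, T ≤ y → D y ≤ ENNReal.ofReal (1 + u) * g y := by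
    intro y hy
    have hy0 : (0:ℝ) ≤ y := le_trans (le_max_right _ _) hy
    have h1 := hT y hy
    rw [hconv2 y hy0, hsplit2 y hy0, ENNReal.toReal_add (hDfin y hy0) (hgne y)] at h1
    have hmt : mtail G y = (g y).toReal := rfl
    rw [hmt] at h1
    have hDr : (D y).toReal ≤ (1 + u) * (g y).toReal := by linarith
    calc D y = ENNReal.ofReal (D y).toReal := (ENNReal.ofReal_toReal (hDfin y hy0)).symm
      _ ≤ ENNReal.ofReal ((1 + u) * (g y).toReal) := ENNReal.ofReal_le_ofReal hDr
      _ = ENNReal.ofReal (1 + u) * ENNReal.ofReal (g y).toReal :=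
          ENNReal.ofReal_mul (by linarith)
      _ = ENNReal.ofReal (1 + u) * g y := by rw [ENNReal.ofReal_toReal (hgne y)]
  -- constants
  obtain ⟨B, hBdef⟩ : ∃ B : ℝ, B = (mtail G T)⁻¹ := ⟨_, rfl⟩
  have hgT : 0 < mtail G T := hGsub.1 T
  have hB0 : 0 < B := by rw [hBdef]; exact inv_pos.mpr hgT
  obtain ⟨k, hkdef⟩ : ∃ k : ℝ, k = B + 1/u + 1 := ⟨_, rfl⟩
  have h1u : 0 < 1/u := by positivity
  have hk0 : 0 < k := by rw [hkdef]; linarith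
  obtain ⟨c, hcdef⟩ : ∃ c : ℕ → ℝ, c = fun n => k * (1+u)^n - 1/u := ⟨_, rfl⟩
  have hc_rec : ∀ n, c (n+1) = 1 + c n * (1+u) := by
    intro n
    simp only [hcdef]
    field_simp
    ring
  have hc_lb : ∀ n, 1 ≤ n → B ≤ c n ∧ 1 ≤ c n := by
    intro n hn
    have hpow : (1+u) ≤ (1+u)^n := by
      calc (1+u) = (1+u)^1 := (pow_one _).symm
        _ ≤ (1+u)^n := pow_le_pow_right₀ (by linarith) hn
    have hkp : k * (1+u) ≤ k * (1+u)^n := by nlinarith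
    constructor
    · have : B + 1 ≤ k * (1+u) - 1/u := by
        rw [hkdef]
        nlinarith [mul_pos hB0 hu]
      simp only [hcdef]; linarith
    · have : (2:ℝ) ≤ k * (1+u) - 1/u := by
        rw [hkdef]
        nlinarith [mul_pos hB0 hu, one_div_mul_cancel (ne_of_gt hu)]
      simp only [hcdef]; linarith
  have hc_ub : ∀ n, c n ≤ k * (1+u)^n := by
    intro n
    simp only [hcdef]; linarith
  -- crude bound
  have hcrude : ∀ (A : ℝ≥0∞) y, A ≤ 1 → 0 ≤ y → y ≤ T →
      A ≤ ENNReal.ofReal B * g y := by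
    intro A y hA h0 hyT
    have hgTy : g T ≤ g y := measure_mono (Set.Ioi_subset_Ioi hyT)
    have h1 : (1:ℝ≥0∞) = ENNReal.ofReal B * g T := by
      have : g T = ENNReal.ofReal (mtail G T) := (ENNReal.ofReal_toReal (hgne T)).symm
      rw [this, ← ENNReal.ofReal_mul hB0.le, hBdef, inv_mul_cancel₀ hgT.ne', ENNReal.ofReal_one]
    calc A ≤ 1 := hA
      _ = ENNReal.ofReal B * g T := h1
      _ ≤ ENNReal.ofReal B * g y := mul_le_mul_right hgTy _
  -- main induction
  have main : ∀ n, 1 ≤ n → ∀ y, 0 ≤ y →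
      P (S n ⁻¹' Set.Ioi y) ≤ ENNReal.ofReal (c n) * g y := by
    intro n hn
    induction n, hn using Nat.le_induction with
    | base =>
      intro y hy
      rw [hbase y]
      calc g y = 1 * g y := (one_mul _).symm
        _ ≤ ENNReal.ofReal (c 1) * g y := by
            refine mul_le_mul_left ?_ _
            rw [ENNReal.one_le_ofReal]
            exact (hc_lb 1 le_rfl).2
    | succ n hn ih =>
      intro y hy
      rcases le_total y T with hyT | hTy
      · refine le_trans (hcrude _ y prob_le_one hy hyT) (mul_le_mul_left ?_ _)
        exact ENNReal.ofReal_le_ofReal (hc_lb (n+1) (Nat.succ_le_succ (Nat.zero_le n))).1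
      · -- y ≥ T
        have step1 : P (S (n+1) ⁻¹' Set.Ioi y)
            ≤ g y + ∫⁻ t in Set.Iic y, P (S n ⁻¹' Set.Ioi (y - t)) ∂G := by
          rw [hrec n y,
            ← lintegral_add_compl (fun t => P (S n ⁻¹' Set.Ioi (y - t)))
              (measurableSet_Iic (a := y)), compl_Iic, add_comm]
          refine add_le_add ?_ le_rfl
          calc (∫⁻ t in Set.Ioi y, P (S n ⁻¹' Set.Ioi (y - t)) ∂G)
              ≤ ∫⁻ _ in Set.Ioi y, 1 ∂G := lintegral_mono fun t => prob_le_one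
            _ = g y := setLIntegral_one _
        have step2 : (∫⁻ t in Set.Iic y, P (S n ⁻¹' Set.Ioi (y - t)) ∂G)
            ≤ ENNReal.ofReal (c n) * D y := by
          rw [hDdef, ← lintegral_const_mul' _ _ ENNReal.ofReal_ne_top]
          refine setLIntegral_mono' measurableSet_Iic fun t ht => ?_
          exact ih (y - t) (by simp only [Set.mem_Iic] at ht; linarith)
        have step3 : ENNReal.ofReal (c n) * D y
            ≤ ENNReal.ofReal (c n) * (ENNReal.ofReal (1 + u) * g y) :=
          mul_le_mul_right (hD y hTy) _
        have hcn0 : 0 ≤ c n := le_trans zero_le_one (hc_lb n hn).2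
        calc P (S (n+1) ⁻¹' Set.Ioi y)
            ≤ g y + ENNReal.ofReal (c n) * (ENNReal.ofReal (1 + u) * g y) :=
              le_trans step1 (add_le_add le_rfl (le_trans step2 step3))
          _ = (1 + ENNReal.ofReal (c n * (1 + u))) * g y := by
              rw [← mul_assoc, ← ENNReal.ofReal_mul hcn0, add_mul, one_mul]
          _ = ENNReal.ofReal (c (n+1)) * g y := by
              rw [hc_rec n, ENNReal.ofReal_add zero_le_one (by nlinarith), ENNReal.ofReal_one]
  -- conclusion
  refine ⟨k, hk0, fun n hn y hy => ?_⟩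
  have hset1 : {ω | ξ 1 ω > y} = ξ 1 ⁻¹' Set.Ioi y := rfl
  have hxi1 : P {ω | ξ 1 ω > y} = g y := by
    rw [hset1, ← Measure.map_apply (hξmeas 1) measurableSet_Ioi, hdist 1 le_rfl]
  have hsetn : {ω | (∑ i ∈ Finset.Icc 1 n, ξ i ω) > y} = S n ⁻¹' Set.Ioi y := rfl
  rw [hsetn, hxi1]
  have h := main n hn y hy
  have hrhs : ENNReal.ofReal (c n) * g y ≠ ⊤ :=
    ENNReal.mul_ne_top ENNReal.ofReal_ne_top (hgne y)
  calc (P (S n ⁻¹' Set.Ioi y)).toReal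
      ≤ (ENNReal.ofReal (c n) * g y).toReal := ENNReal.toReal_mono hrhs h
    _ = c n * (g y).toReal := by
        rw [ENNReal.toReal_mul, ENNReal.toReal_ofReal
          (le_trans zero_le_one (hc_lb n hn).2)]
    _ ≤ k * (1 + u) ^ n * (g y).toReal := by
        refine mul_le_mul_of_nonneg_right (hc_ub n) ENNReal.toReal_nonneg
end
end
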